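/- Let parts V_1,...,V_p have sizes n_i > \lambda_i, where \lambda = (\lambda_1,...,\lambda_p) is a partition of k. The lattice generated by the vectors e_S, over all \lambda-balanced hyperedges S (sets containing exactly \lambda_i vertices of V_i), equals the set of integer vectors d = (d^1;...;d^p) for which there exists q \in Z with \sum_j d^i_j = \lambda_i q for all i. -/

import Mathlib

/-- A hyperedge `S` is `λ`-balanced if it contains exactly `lam i` vertices of the `i`-th
part `V_i`. -/
def IsBalanced {p : ℕ} (n : Fin p → ℕ) (lam : Fin p → ℕ)
    (S : Finset (Σ i : Fin p, Fin (n i))) : Prop :=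
  ∀ i : Fin p, (S.filter (fun v => v.1 = i)).card = lam i

/-- The indicator vector of a hyperedge. -/
def eS {p : ℕ} (n : Fin p → ℕ) (S : Finset (Σ i : Fin p, Fin (n i))) :
    (Σ i : Fin p, Fin (n i)) → ℤ :=
  fun v => if v ∈ S then 1 else 0

/-!
Every `e_S` has part sums `λ_i`, which gives one inclusion. Conversely, take a set `R` with
`λ_i - 1` vertices in `V_i`, `λ_{i'}` vertices in every other part, and missing two given
vertices `a, b ∈ V_i` (possible since `0 < λ_i < n_i`); then `R ∪ {a}` and `R ∪ {b}` are balanced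
and `e_{R ∪ {a}} - e_{R ∪ {b}} = δ_a - δ_b`. If `d` has part sums `λ_i q`, then `d - q e_{S₀}`
has zero part sums for any balanced `S₀`, and such a vector is an integer combination of the
differences `δ_a - δ_b` with `a, b` in the same part.
-/

open Finset

theorem AddSubgroup.mem_of_sum_fiber_eq_zero {ι : Type*} {α : ι → Type*} [Fintype ι]
    [∀ i, Fintype (α i)] [DecidableEq ι] [∀ i, DecidableEq (α i)]
    (H : AddSubgroup ((Σ i, α i) → ℤ)) (base : ∀ i, α i)
    (hH : ∀ i j, Pi.single ⟨i, j⟩ 1 - Pi.single ⟨i, base i⟩ 1 ∈ H)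
    {f : (Σ i, α i) → ℤ} (hf : ∀ i, ∑ j, f ⟨i, j⟩ = 0) : f ∈ H := by
  have hbase : ∑ v : Σ i, α i, f v • (Pi.single ⟨v.1, base v.1⟩ 1 : (Σ i, α i) → ℤ) = 0 := by
    simp only [Fintype.sum_sigma, ← sum_smul, hf, zero_smul, sum_const_zero]
  have hf' : f = ∑ v, f v • (Pi.single v 1 - Pi.single ⟨v.1, base v.1⟩ 1) := by
    simp only [smul_sub, sum_sub_distrib, hbase, sub_zero]
    simp only [← Pi.single_smul', smul_eq_mul, mul_one, univ_sum_single]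
  rw [hf']
  exact sum_mem fun v _ => AddSubgroup.zsmul_mem _ (hH v.1 v.2) _

variable {p : ℕ} {n : Fin p → ℕ}

theorem sum_eS (S : Finset (Σ i : Fin p, Fin (n i))) (i : Fin p) :
    ∑ j, eS n S ⟨i, j⟩ = #(S.filter (·.1 = i)) := by
  have : S.filter (·.1 = i) = (univ.filter fun j => ⟨i, j⟩ ∈ S).map (.sigmaMk i) := by
    ext ⟨i', j⟩
    simp only [mem_filter, mem_map, mem_univ, true_and, Function.Embedding.sigmaMk_apply]
    constructor
    · rintro ⟨hS, rfl⟩; exact ⟨j, hS, rfl⟩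
    · rintro ⟨j, hj, h⟩; cases h; exact ⟨hj, rfl⟩
  simp [eS, this]

theorem eS_insert {S : Finset (Σ i : Fin p, Fin (n i))} {a : Σ i : Fin p, Fin (n i)}
    (ha : a ∉ S) :
    eS n (insert a S) = eS n S + Pi.single a 1 := by
  ext v
  rcases eq_or_ne v a with rfl | hva
  · simp [eS, ha]
  · simp [eS, hva]

theorem isBalanced_univ_sigma {μ : Fin p → ℕ} (T : ∀ i, Finset (Fin (n i)))
    (hT : ∀ i, #(T i) = μ i) : IsBalanced n μ (univ.sigma T) := by
  intro i
  have : (univ.sigma T).filter (·.1 = i) = ({i} : Finset (Fin p)).sigma T := by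
    ext ⟨i', j⟩
    simp only [mem_filter, mem_sigma, mem_univ, true_and, mem_singleton]
    tauto
  rw [this, card_sigma, sum_singleton, hT]

theorem exists_isBalanced_subset_univ_sigma {μ : Fin p → ℕ} (A : ∀ i, Finset (Fin (n i)))
    (hA : ∀ i, μ i ≤ #(A i)) : ∃ S ⊆ univ.sigma A, IsBalanced n μ S := by
  choose T hTA hT using fun i => exists_subset_card_eq (hA i)
  exact ⟨univ.sigma T, sigma_mono le_rfl hTA, isBalanced_univ_sigma T hT⟩

theorem IsBalanced.insert {μ : Fin p → ℕ} {S : Finset (Σ i : Fin p, Fin (n i))}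
    (hS : IsBalanced n μ S) {a : Σ i : Fin p, Fin (n i)} (ha : a ∉ S) :
    IsBalanced n (Function.update μ a.1 (μ a.1 + 1)) (insert a S) := by
  intro i
  rw [filter_insert]
  rcases eq_or_ne a.1 i with rfl | h
  · rw [if_pos rfl, card_insert_of_notMem fun h => ha (mem_filter.1 h).1, hS,
      Function.update_self]
  · rw [if_neg h, hS, Function.update_of_ne (Ne.symm h)]

variable (n) in
def balancedLattice (lam : Fin p → ℕ) : AddSubgroup ((Σ i : Fin p, Fin (n i)) → ℤ) :=
  AddSubgroup.closure {v | ∃ S, IsBalanced n lam S ∧ v = eS n S}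

variable {lam : Fin p → ℕ}

theorem eS_mem_balancedLattice {S : Finset (Σ i : Fin p, Fin (n i))} (hS : IsBalanced n lam S) :
    eS n S ∈ balancedLattice n lam :=
  AddSubgroup.subset_closure ⟨S, hS, rfl⟩

theorem single_sub_single_mem_balancedLattice (hle : ∀ i, lam i ≤ n i) {i : Fin p}
    (hpos : 0 < lam i) (hlt : lam i < n i) (j j' : Fin (n i)) :
    Pi.single ⟨i, j⟩ 1 - Pi.single ⟨i, j'⟩ 1 ∈ balancedLattice n lam := by
  rcases eq_or_ne j j' with rfl | hne
  · simp
  obtain ⟨R, hRA, hR⟩ := exists_isBalanced_subset_univ_sigma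
    (μ := Function.update lam i (lam i - 1)) (Function.update (fun _ => univ) i {j, j'}ᶜ) <| by
      intro i'
      rcases eq_or_ne i' i with rfl | h
      · simp only [Function.update_self, card_compl, Fintype.card_fin, card_pair hne]
        omega
      · simp [Function.update_of_ne h, hle]
  have hnotin : ∀ m ∈ ({j, j'} : Finset (Fin (n i))), ⟨i, m⟩ ∉ R := fun m hm hmR => by
    have hmA := (mem_sigma.1 (hRA hmR)).2
    rw [Function.update_self, mem_compl] at hmA
    exact hmA hm
  have hupdate : Function.update (Function.update lam i (lam i - 1)) i
      (Function.update lam i (lam i - 1) i + 1) = lam := by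
    rw [Function.update_self, Nat.sub_add_cancel hpos, Function.update_idem,
      Function.update_eq_self]
  have hRj := hR.insert (hnotin j (by simp))
  have hRj' := hR.insert (hnotin j' (by simp))
  rw [hupdate] at hRj hRj'
  have hdiff : Pi.single ⟨i, j⟩ 1 - Pi.single ⟨i, j'⟩ 1
      = eS n (insert ⟨i, j⟩ R) - eS n (insert ⟨i, j'⟩ R) := by
    rw [eS_insert (hnotin j (by simp)), eS_insert (hnotin j' (by simp))]
    abel
  rw [hdiff]
  exact sub_mem (eS_mem_balancedLattice hRj) (eS_mem_balancedLattice hRj')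

variable (n lam) in
def proportionalPartSums : AddSubgroup ((Σ i : Fin p, Fin (n i)) → ℤ) where
  carrier := {d | ∃ q : ℤ, ∀ i, ∑ j, d ⟨i, j⟩ = lam i * q}
  zero_mem' := ⟨0, by simp⟩
  add_mem' := by
    rintro a b ⟨qa, ha⟩ ⟨qb, hb⟩
    exact ⟨qa + qb, fun i => by simp only [Pi.add_apply, sum_add_distrib, ha, hb, mul_add]⟩
  neg_mem' := by
    rintro a ⟨qa, ha⟩
    exact ⟨-qa, fun i => by simp only [Pi.neg_apply, sum_neg_distrib, ha, mul_neg]⟩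

theorem balancedLattice_le_proportionalPartSums :
    balancedLattice n lam ≤ proportionalPartSums n lam :=
  (AddSubgroup.closure_le _).2 <| by
    rintro _ ⟨S, hS, rfl⟩
    exact ⟨1, fun i => by rw [sum_eS, hS i, mul_one]⟩

theorem proportionalPartSums_le_balancedLattice (hpos : ∀ i, 0 < lam i)
    (hn : ∀ i, lam i < n i) : proportionalPartSums n lam ≤ balancedLattice n lam := by
  rintro d ⟨q, hq⟩
  obtain ⟨S₀, -, hS₀⟩ := exists_isBalanced_subset_univ_sigma (μ := lam) (fun _ => univ)
    (by simpa using fun i => (hn i).le)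
  have hrest : d - q • eS n S₀ ∈ balancedLattice n lam :=
    AddSubgroup.mem_of_sum_fiber_eq_zero _ (fun i => ⟨0, (hpos i).trans (hn i)⟩)
      (fun i j => single_sub_single_mem_balancedLattice (fun i => (hn i).le) (hpos i) (hn i) j _)
      (fun i => by simp [sum_sub_distrib, ← mul_sum, sum_eS, hS₀ i, hq i, mul_comm])
  simpa using add_mem hrest (AddSubgroup.zsmul_mem _ (eS_mem_balancedLattice hS₀) q)

theorem balanced_lattice_general (p : ℕ) (n lam : Fin p → ℕ)
    (hpos : ∀ i, 0 < lam i) (hn : ∀ i, lam i < n i)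
    (d : (Σ i : Fin p, Fin (n i)) → ℤ) :
    d ∈ AddSubgroup.closure
        {v | ∃ S : Finset (Σ i : Fin p, Fin (n i)),
          IsBalanced n lam S ∧ v = eS n S} ↔
      ∃ q : ℤ, ∀ i : Fin p, (∑ j : Fin (n i), d ⟨i, j⟩) = (lam i : ℤ) * q :=
  ⟨fun hd => balancedLattice_le_proportionalPartSums hd,
    fun hd => proportionalPartSums_le_balancedLattice hpos hn hd⟩

/-- Let `λ = (λ₁,…,λ_p)` be a partition of `k` and let the parts `V_i` have sizes
`n_i > λ_i`. The lattice generated by the `e_S` over all `λ`-balanced hyperedges `S` equals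
the set of integer vectors `d` for which there exists `q ∈ ℤ` with `∑_j d^i_j = λ_i q` for
all `i`. -/
theorem balanced_lattice (p k : ℕ) (n lam : Fin p → ℕ) (hpart : ∑ i, lam i = k)
    (hpos : ∀ i, 0 < lam i) (hn : ∀ i, lam i < n i)
    (d : (Σ i : Fin p, Fin (n i)) → ℤ) :
    d ∈ AddSubgroup.closure
        {v | ∃ S : Finset (Σ i : Fin p, Fin (n i)),
          IsBalanced n lam S ∧ v = eS n S} ↔
      ∃ q : ℤ, ∀ i : Fin p, (∑ j : Fin (n i), d ⟨i, j⟩) = (lam i : ℤ) * q :=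
  balanced_lattice_general p n lam hpos hn d
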